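/- Let m ≥ 1 and let g : {0,1}^m → {0,1} be a single logic gate, i.e., either (i) the AND of the coordinates in some nonempty subset S ⊆ {1,…,m}, (ii) the OR of the coordinates in some nonempty subset S ⊆ {1,…,m}, or (iii) the negation of a single coordinate. Then there exist an affine map A : ℝ^m → ℝ^{m+1} and an affine map B : ℝ^{m+1} → ℝ^{m+1} such that for every x ∈ ℝ^m with all coordinates in {0,1}, B(ReLU(A x)) = (x, g(x)), where ReLU is applied coordinatewise. That is, one hidden ReLU layer of width m+1 can compute any single gate while exactly copying all of its Boolean inputs to the output. -/
import Mathlib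


/-- ReLU activation: `ReLU x = max x 0`. -/
noncomputable def ReLU (x : ℝ) : ℝ := max x 0

lemma ReLU_of_nonneg {x : ℝ} (h : 0 ≤ x) : ReLU x = x := max_eq_left h

lemma ReLU_of_nonpos {x : ℝ} (h : x ≤ 0) : ReLU x = 0 := max_eq_right h

/-- General construction: first `m` hidden units copy the inputs; the last
hidden unit computes `ReLU (∑ w k * x k + c)`, and the output layer applies
`s * ⬝ + t` to it. -/
lemma build_gate (m : ℕ) (g : (Fin m → ℝ) → ℝ) (w : Fin m → ℝ) (c s t : ℝ)
    (h : ∀ x : Fin m → ℝ, (∀ i, x i = 0 ∨ x i = 1) →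
      s * ReLU ((∑ k, w k * x k) + c) + t = g x) :
    ∃ (A : Matrix (Fin (m + 1)) (Fin m) ℝ) (a : Fin (m + 1) → ℝ)
      (B : Matrix (Fin (m + 1)) (Fin (m + 1)) ℝ) (b : Fin (m + 1) → ℝ),
      ∀ x : Fin m → ℝ, (∀ i, x i = 0 ∨ x i = 1) →
        (fun j => B.mulVec (fun k => ReLU (A.mulVec x k + a k)) j + b j) =
          Fin.snoc x (g x) := by
  refine ⟨Matrix.of fun j k =>
      Fin.lastCases (w k) (fun i => if k = i then 1 else 0) j,
    Fin.lastCases c (fun _ => 0),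
    Matrix.of fun j k =>
      Fin.lastCases (if k = Fin.last m then s else 0)
        (fun i => if k = i.castSucc then 1 else 0) j,
    Fin.lastCases t (fun _ => 0), ?_⟩
  intro x hx
  have hidden : ∀ k : Fin (m + 1),
      ReLU ((Matrix.of fun j k =>
        Fin.lastCases (w k) (fun i => if k = i then 1 else 0) j).mulVec x k
        + Fin.lastCases c (fun _ => (0 : ℝ)) k) =
      Fin.lastCases (ReLU ((∑ k, w k * x k) + c)) (fun i => x i) k := by
    intro k
    refine Fin.lastCases ?_ (fun i => ?_) k
    · simp [Matrix.mulVec, dotProduct]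
    · simp only [Fin.lastCases_castSucc, Matrix.mulVec, dotProduct,
        Matrix.of_apply]
      have : ∑ j, (if j = i then (1 : ℝ) else 0) * x j = x i := by
        rw [Finset.sum_eq_single i] <;> simp +contextual
      rw [this, add_zero]
      rcases hx i with h0 | h1
      · rw [h0]; exact ReLU_of_nonneg le_rfl
      · rw [h1]; exact ReLU_of_nonneg zero_le_one
  funext j
  simp only [hidden]
  refine Fin.lastCases ?_ (fun i => ?_) j
  · simp only [Fin.lastCases_last, Matrix.mulVec, dotProduct,
      Matrix.of_apply, Fin.snoc_last]
    have : ∑ k : Fin (m + 1), (if k = Fin.last m then s else 0) *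
        Fin.lastCases (ReLU ((∑ k, w k * x k) + c)) (fun i => x i) k
        = s * ReLU ((∑ k, w k * x k) + c) := by
      rw [Finset.sum_eq_single (Fin.last m)] <;> simp +contextual
    rw [this]
    exact h x hx
  · simp only [Fin.lastCases_castSucc, Matrix.mulVec, dotProduct,
      Matrix.of_apply, Fin.snoc_castSucc]
    have : ∑ k : Fin (m + 1), (if k = i.castSucc then (1 : ℝ) else 0) *
        Fin.lastCases (ReLU ((∑ k, w k * x k) + c)) (fun i => x i) k = x i := by
      rw [Finset.sum_eq_single i.castSucc] <;> simp +contextual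
    rw [this, add_zero]

/-- One hidden ReLU layer of width `m + 1` can compute any single logic gate
(an AND over a nonempty subset of the pins, an OR over a nonempty subset of
the pins, or the NOT of a single pin) while exactly copying all of its Boolean
inputs to the output: there are affine maps `A : ℝ^m → ℝ^(m+1)` and
`B : ℝ^(m+1) → ℝ^(m+1)` with `B (ReLU (A x)) = (x, g x)` on all Boolean `x`. -/
theorem single_gate_with_copy (m : ℕ) (hm : 1 ≤ m)
    (g : (Fin m → ℝ) → ℝ)
    (hg :
      (∃ S : Finset (Fin m), S.Nonempty ∧
        ∀ x : Fin m → ℝ, (∀ i, x i = 0 ∨ x i = 1) →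
          g x = if ∀ i ∈ S, x i = 1 then 1 else 0) ∨
      (∃ S : Finset (Fin m), S.Nonempty ∧
        ∀ x : Fin m → ℝ, (∀ i, x i = 0 ∨ x i = 1) →
          g x = if ∃ i ∈ S, x i = 1 then 1 else 0) ∨
      (∃ i : Fin m,
        ∀ x : Fin m → ℝ, (∀ i, x i = 0 ∨ x i = 1) →
          g x = 1 - x i)) :
    ∃ (A : Matrix (Fin (m + 1)) (Fin m) ℝ) (a : Fin (m + 1) → ℝ)
      (B : Matrix (Fin (m + 1)) (Fin (m + 1)) ℝ) (b : Fin (m + 1) → ℝ),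
      ∀ x : Fin m → ℝ, (∀ i, x i = 0 ∨ x i = 1) →
        (fun j => B.mulVec (fun k => ReLU (A.mulVec x k + a k)) j + b j) =
          Fin.snoc x (g x) := by
  rcases hg with ⟨S, hS, hgeq⟩ | ⟨S, hS, hgeq⟩ | ⟨i, hgeq⟩
  · -- AND gate: w = indicator of S, c = 1 - |S|, s = 1, t = 0
    apply build_gate m g (fun k => if k ∈ S then 1 else 0) (1 - S.card) 1 0
    intro x hx
    rw [hgeq x hx]
    have hsum : ∑ k, (if k ∈ S then (1:ℝ) else 0) * x k = ∑ k ∈ S, x k := by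
      simp only [ite_mul, one_mul, zero_mul, Finset.sum_ite_mem,
        Finset.univ_inter]
    rw [hsum]
    by_cases hall : ∀ i ∈ S, x i = 1
    · have : ∑ k ∈ S, x k = S.card := by
        rw [Finset.sum_congr rfl hall]; simp
      rw [this, if_pos hall]
      rw [show (S.card : ℝ) + (1 - S.card) = 1 by ring]
      rw [ReLU_of_nonneg zero_le_one]; ring
    · push_neg at hall
      obtain ⟨i0, hi0, hxi0⟩ := hall
      have hxi0' : x i0 = 0 := (hx i0).resolve_right hxi0
      have hle : ∑ k ∈ S, x k ≤ (S.card : ℝ) - 1 := by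
        rw [← Finset.add_sum_erase S x hi0, hxi0', zero_add]
        calc ∑ k ∈ S.erase i0, x k ≤ ∑ _k ∈ S.erase i0, (1:ℝ) := by
              refine Finset.sum_le_sum fun k _ => ?_
              rcases hx k with h0 | h1
              · rw [h0]; exact zero_le_one
              · rw [h1]
          _ = (S.erase i0).card := by simp
          _ = (S.card : ℝ) - 1 := by
              rw [Finset.card_erase_of_mem hi0]
              have : 1 ≤ S.card := Finset.card_pos.mpr ⟨i0, hi0⟩
              push_cast [this]; ring
      rw [if_neg (by push_neg; exact ⟨i0, hi0, hxi0⟩)]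
      rw [ReLU_of_nonpos (by linarith)]; ring
  · -- OR gate: w = -indicator, c = 1, s = -1, t = 1
    apply build_gate m g (fun k => if k ∈ S then -1 else 0) 1 (-1) 1
    intro x hx
    rw [hgeq x hx]
    have hsum : ∑ k, (if k ∈ S then (-1:ℝ) else 0) * x k = -∑ k ∈ S, x k := by
      simp only [ite_mul, neg_one_mul, zero_mul, Finset.sum_ite_mem,
        Finset.univ_inter, Finset.sum_neg_distrib]
    rw [hsum]
    by_cases hex : ∃ i ∈ S, x i = 1
    · obtain ⟨i0, hi0, hxi0⟩ := hex
      have hge : (1:ℝ) ≤ ∑ k ∈ S, x k := by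
        rw [← hxi0]
        refine Finset.single_le_sum (fun k _ => ?_) hi0
        rcases hx k with h0 | h1
        · rw [h0]
        · rw [h1]; exact zero_le_one
      rw [if_pos ⟨i0, hi0, hxi0⟩, ReLU_of_nonpos (by linarith)]; ring
    · push_neg at hex
      have : ∑ k ∈ S, x k = 0 := Finset.sum_eq_zero fun k hk =>
        (hx k).resolve_right (hex k hk)
      rw [this, if_neg (by push_neg; exact fun k hk => (hx k).resolve_right (hex k hk) ▸ (hex k hk))]
      norm_num [ReLU_of_nonneg zero_le_one]
  · -- NOT gate: w = -e_i, c = 1, s = 1, t = 0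
    apply build_gate m g (fun k => if k = i then -1 else 0) 1 1 0
    intro x hx
    rw [hgeq x hx]
    have hsum : ∑ k, (if k = i then (-1:ℝ) else 0) * x k = -x i := by
      rw [Finset.sum_eq_single i] <;> simp +contextual
    rw [hsum]
    have h1x : (0:ℝ) ≤ 1 - x i := by
      rcases hx i with h0 | h1
      · rw [h0]; norm_num
      · rw [h1]; norm_num
    rw [show -x i + 1 = 1 - x i by ring, ReLU_of_nonneg h1x]; ring
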